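/- Let X be a Haar system space and T : L_1(X) → L_1(X) an X-diagonal operator with entries (T^L)_{L∈D^+}. Let Γ be a finite disjoint collection of dyadic intervals with union Γ* and let θ ∈ {−1,1}^Γ. Then the operator T^{(ν_{Γ*} h_Γ^θ, μ_{Γ*} h_Γ^θ)} : L_1 → L_1 equals Σ_{L∈Γ} (|L|/|Γ*|) T^L; in particular it does not depend on the choice of signs θ. -/

import Mathlib

open MeasureTheory Filter Set
open scoped ENNReal

noncomputable section
open Classical

/-- The dyadic interval of level `n` and position `i`. -/
def dyI (n i : ℕ) : Set ℝ := Set.Ico ((i : ℝ) / 2 ^ n) ((i + 1 : ℝ) / 2 ^ n)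

/-- The Haar function of the dyadic interval of level `n`, position `i`. -/
def haarFn (n i : ℕ) : ℝ → ℝ := fun x =>
  if x ∈ dyI (n + 1) (2 * i) then 1 else if x ∈ dyI (n + 1) (2 * i + 1) then -1 else 0

/-- Indexing of `D⁺`: `none` is the "empty" index `∅`, `some (n, i)` a dyadic interval. -/
def haarP : Option (ℕ × ℕ) → ℝ → ℝ
  | none => (Set.Ico (0 : ℝ) 1).indicator 1
  | some (n, i) => haarFn n i

/-- The interval supporting a given index of `D⁺` (with the convention that `∅` is
supported on `[0,1)`). -/
def suppI : Option (ℕ × ℕ) → Set ℝ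
  | none => Set.Ico (0 : ℝ) 1
  | some p => dyI p.1 p.2

def lenI : Option (ℕ × ℕ) → ℝ
  | none => 1
  | some (n, _i) => 1 / 2 ^ n

def validIdx : Option (ℕ × ℕ) → Prop
  | none => True
  | some (n, i) => i < 2 ^ n

/-- The position of the `k`-th member of a branch determined by signs `θ`
(`θ k = true` means the branch turns to the left half at step `k`). -/
def branchPos (θ : ℕ → Bool) : ℕ → ℕ
  | 0 => 0
  | 1 => 0
  | k + 2 => 2 * branchPos θ (k + 1) + (if θ (k + 1) then 0 else 1)

/-- The `k`-th member `I_k` of the branch determined by `θ`, as an index in `D⁺`. -/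
def branchI (θ : ℕ → Bool) (k : ℕ) : Option (ℕ × ℕ) :=
  if k = 0 then none else some (k - 1, branchPos θ k)

/-- The sign `θ_k`, with the convention `θ_0 = 1`. -/
def branchSgn (θ : ℕ → Bool) (k : ℕ) : ℝ :=
  if k = 0 then 1 else if θ k then 1 else -1

/-- The weight `|I_k|⁻¹`, with the convention `|I_0|⁻¹ = |∅|⁻¹ = 1`. -/
def branchWt (k : ℕ) : ℝ := if k = 0 then 1 else 2 ^ (k - 1)

/-- `B_k = I_k \ I_{k+1}`. -/
def branchB (θ : ℕ → Bool) (k : ℕ) : Set ℝ := suppI (branchI θ k) \ suppI (branchI θ (k + 1))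


/-- Lebesgue measure restricted to `[0,1)`. -/
def mu01 : Measure ℝ := volume.restrict (Set.Ico 0 1)

lemma mu01_ne_top (s : Set ℝ) : mu01 s ≠ ⊤ := by
  refine ne_top_of_le_ne_top ?_ (measure_mono (Set.subset_univ s))
  have : mu01 Set.univ = volume (Set.Ico (0:ℝ) 1) := by
    simp [mu01]
  rw [this, Real.volume_Ico]
  exact ENNReal.ofReal_ne_top

/-- indicator of a measurable set, as an element of `L₁[0,1)`. -/
def indL1 (s : Set ℝ) (hs : MeasurableSet s) : Lp ℝ 1 mu01 :=
  indicatorConstLp 1 hs (mu01_ne_top s) (1 : ℝ)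

/-- The Haar system as elements of `L₁[0,1)`, indexed by `D⁺`. -/
def haarL1 : Option (ℕ × ℕ) → Lp ℝ 1 mu01
  | none => indL1 (Set.Ico (0 : ℝ) 1) measurableSet_Ico
  | some (n, i) => indL1 (dyI (n + 1) (2 * i)) measurableSet_Ico
      - indL1 (dyI (n + 1) (2 * i + 1)) measurableSet_Ico

section Tensor

variable {X : Type*} [NormedAddCommGroup X] [NormedSpace ℝ X]

/-- the elementary tensor `f ⊗ x` as an element of the Bochner space `L₁([0,1); X)`. -/
def tensorL1 (f : Lp ℝ 1 mu01) (x : X) : Lp X 1 mu01 :=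
  ((L1.integrable_coeFn f).smul_const x).toL1 _

/-- For an operator `T` on `L₁(X)`, a functional `g ∈ X*` and a vector `x ∈ X`, the operator
`T^{(g,x)} : L₁ → L₁` defined by `⟨e*, T^{(g,x)} e⟩ = ⟨e* ⊗ g, T (e ⊗ x)⟩`; concretely
`T^{(g,x)} e = (s ↦ g ((T (e ⊗ x)) s))`. -/
def entryFun (T : Lp X 1 mu01 →L[ℝ] Lp X 1 mu01) (g : X →L[ℝ] ℝ) (x : X)
    (f : Lp ℝ 1 mu01) : Lp ℝ 1 mu01 :=
  (g.integrable_comp (L1.integrable_coeFn (T (tensorL1 f x)))).toL1 _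

end Tensor

/-- the linear span `Z` of the indicators of dyadic intervals. -/
def dyadicSpan : Submodule ℝ (ℝ → ℝ) :=
  Submodule.span ℝ {f | ∃ n i, i < 2 ^ n ∧ f = (dyI n i).indicator 1}

/-- A Haar system space norm: a norm on the span `Z` of the dyadic indicators which is
invariant under equidistribution and gives `χ_{[0,1)}` norm one.  The corresponding Haar
system space is the completion of `Z` under this norm. -/
structure HaarSystemNorm where
  N : (ℝ → ℝ) → ℝ
  nonneg : ∀ f, 0 ≤ N f
  add_le : ∀ f g, f ∈ dyadicSpan → g ∈ dyadicSpan → N (f + g) ≤ N f + N g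
  smul_eq : ∀ (c : ℝ) f, f ∈ dyadicSpan → N (c • f) = |c| * N f
  eq_zero : ∀ f, f ∈ dyadicSpan → N f = 0 → f = 0
  distrib_inv : ∀ f g, f ∈ dyadicSpan → g ∈ dyadicSpan →
    (∀ t : ℝ, volume {x | t < |f x|} = volume {x | t < |g x|}) → N f = N g
  norm_one : N ((Set.Ico (0 : ℝ) 1).indicator 1) = 1

/-- A realization of the Haar system space determined by a Haar system norm:
a Banach space `X` together with a linear embedding `j` of the span of the dyadic
indicators, which is isometric on the span and has dense range. -/
structure HaarSystemSpace (X : Type*) [NormedAddCommGroup X] [NormedSpace ℝ X] where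
  hn : HaarSystemNorm
  j : (ℝ → ℝ) →ₗ[ℝ] X
  norm_j : ∀ f ∈ dyadicSpan, ‖j f‖ = hn.N f
  dense_j : DenseRange (fun f : dyadicSpan => j f)

/-- the `X`-normalized Haar system `μ_L h_L` in a Haar system space. -/
def HaarSystemSpace.e {X : Type*} [NormedAddCommGroup X] [NormedSpace ℝ X]
    (H : HaarSystemSpace X) (L : Option (ℕ × ℕ)) : X :=
  ‖H.j ((suppI L).indicator 1)‖⁻¹ • H.j (haarP L)

section Factors

variable {X : Type*} [NormedAddCommGroup X] [NormedSpace ℝ X]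

/-- `T` is a `C`-factor of `S` with error `ε`. -/
def IsFactor (C ε : ℝ) (T S : X →L[ℝ] X) : Prop :=
  ∃ A B : X →L[ℝ] X, ‖B.comp (T.comp A) - S‖ ≤ ε ∧ ‖A‖ * ‖B‖ ≤ C

/-- `T` is a `C`-projectional factor of `S` with error `ε`: here `A : X → Y ⊆ X` is the
isomorphism onto a complemented subspace and `B = A⁻¹P` where `P` is the projection,
so that `B ∘ A = Id`. -/
def IsProjFactor (C ε : ℝ) (T S : X →L[ℝ] X) : Prop :=
  ∃ A B : X →L[ℝ] X, B.comp A = ContinuousLinearMap.id ℝ X ∧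
    ‖B.comp (T.comp A) - S‖ ≤ ε ∧ ‖A‖ * ‖B‖ ≤ C

end Factors

/-- the `n`-th Rademacher function `r_n = ∑_{L ∈ D_n} h_L`. -/
def rademacherFn (n : ℕ) : ℝ → ℝ := fun x => ∑ i ∈ Finset.range (2 ^ n), haarFn n i x

/-- Enumeration of the Haar system in the usual linear order `ι`
(`haarEnum 1 = h_∅`, `haarEnum 2 = h_{[0,1)}`, then level by level). -/
def haarEnum : ℕ → ℝ → ℝ := fun m =>
  if m ≤ 1 then (Set.Ico (0 : ℝ) 1).indicator 1
  else haarFn (Nat.log 2 (m - 1)) (m - 2 ^ Nat.log 2 (m - 1) - 1)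

/-- extraction of binary digits: `digitsFn x k` records whether the `k`-th digit of `x`
is `0`, i.e. whether the branch through `x` turns left at step `k`. -/
def digitsFn (x : ℝ) : ℕ → Bool := fun k => decide (⌊x * 2 ^ k⌋ % 2 = 0)

/-- the coin-tossing measure on the space of branches `[D⁺] ≃ {-1,1}^ℕ`, realized as the
image of Lebesgue measure on `[0,1)` under the binary-digit identification. -/
def muBr : Measure (ℕ → Bool) := Measure.map digitsFn mu01

/-- `h_Γ^θ = ∑_{J ∈ Γ} θ_J h_J` for a finite collection `Γ` of dyadic intervals. -/
def hGamma (Γ : Finset (ℕ × ℕ)) (θ : ℕ × ℕ → Bool) : ℝ → ℝ :=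
  fun x => ∑ J ∈ Γ, (if θ J then (1:ℝ) else -1) * haarFn J.1 J.2 x

/-- `Γ* = ∪ {I : I ∈ Γ}`. -/
def GammaStar (Γ : Finset (ℕ × ℕ)) : Set ℝ := ⋃ J ∈ Γ, dyI J.1 J.2

/-- `|Γ*|`, the total length of a disjoint finite collection of dyadic intervals. -/
def lenGamma (Γ : Finset (ℕ × ℕ)) : ℝ := ∑ J ∈ Γ, (1 : ℝ) / 2 ^ J.1

/-!
Write `κ = ‖χ_{Γ*}‖_X` and `κ_J = ‖χ_J‖_X`. Then `κ⁻¹ h_Γ^θ = ∑_{J ∈ Γ} κ⁻¹ θ_J κ_J (μ_J h_J)`,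
and since `T` is diagonal on each `μ_J h_J`, the entry at this vector is
`∑_J κ⁻¹ θ_J κ_J g(μ_J h_J) T^J`. Because the intervals of `Γ` are disjoint, `h_J` is
orthogonal to every other Haar function of `Γ`, so `g(μ_J h_J) = κ_J⁻¹ (κ / |Γ*|) θ_J |J|`;
the signs cancel as `θ_J² = 1`.
-/

section TensorL1

variable {X : Type*} [NormedAddCommGroup X] [NormedSpace ℝ X]

lemma coeFn_tensorL1 (f : Lp ℝ 1 mu01) (x : X) :
    (tensorL1 f x : ℝ → X) =ᵐ[mu01] fun s => f s • x :=
  Integrable.coeFn_toL1 _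

def tensorL1Right (f : Lp ℝ 1 mu01) : X →ₗ[ℝ] Lp X 1 mu01 where
  toFun := tensorL1 f
  map_add' x y := by
    refine Lp.ext ?_
    filter_upwards [coeFn_tensorL1 f (x + y), Lp.coeFn_add (tensorL1 f x) (tensorL1 f y),
      coeFn_tensorL1 f x, coeFn_tensorL1 f y] with s h h₁ h₂ h₃
    rw [h, h₁, Pi.add_apply, h₂, h₃, smul_add]
  map_smul' c x := by
    refine Lp.ext ?_
    filter_upwards [coeFn_tensorL1 f (c • x), Lp.coeFn_smul c (tensorL1 f x),
      coeFn_tensorL1 f x] with s h h₁ h₂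
    rw [h, RingHom.id_apply, h₁, Pi.smul_apply, h₂, smul_comm]

lemma tensorL1Right_apply (f : Lp ℝ 1 mu01) (x : X) : tensorL1Right f x = tensorL1 f x := rfl

lemma entryFun_eq_compLpL (T : Lp X 1 mu01 →L[ℝ] Lp X 1 mu01) (g : X →L[ℝ] ℝ) (x : X)
    (f : Lp ℝ 1 mu01) :
    entryFun T g x f = g.compLpL 1 mu01 (T (tensorL1 f x)) :=
  Lp.ext ((Integrable.coeFn_toL1 _).trans (g.coeFn_compLpL _).symm)

lemma compLpL_tensorL1 (g : X →L[ℝ] ℝ) (f : Lp ℝ 1 mu01) (x : X) :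
    g.compLpL 1 mu01 (tensorL1 f x) = g x • f := by
  refine Lp.ext ?_
  filter_upwards [g.coeFn_compLpL (tensorL1 f x), coeFn_tensorL1 f x,
    Lp.coeFn_smul (g x) f] with s h h₁ h₂
  rw [h, h₁, h₂, Pi.smul_apply, map_smul, smul_eq_mul, smul_eq_mul, mul_comm]

lemma entryFun_sum_smul_of_diag {ι : Type*} (T : Lp X 1 mu01 →L[ℝ] Lp X 1 mu01)
    (g : X →L[ℝ] ℝ) (s : Finset ι) (c : ι → ℝ) (v : ι → X)
    (S : ι → Lp ℝ 1 mu01 → Lp ℝ 1 mu01) (f : Lp ℝ 1 mu01)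
    (hS : ∀ i ∈ s, T (tensorL1 f (v i)) = tensorL1 (S i f) (v i)) :
    entryFun T g (∑ i ∈ s, c i • v i) f = ∑ i ∈ s, (c i * g (v i)) • S i f := by
  rw [entryFun_eq_compLpL, ← tensorL1Right_apply, map_sum, map_sum, map_sum]
  refine Finset.sum_congr rfl fun i hi => ?_
  rw [map_smul, map_smul, map_smul, tensorL1Right_apply, hS i hi, compLpL_tensorL1, smul_smul]

end TensorL1

lemma left_mem_dyI (n i : ℕ) : (i : ℝ) / 2 ^ n ∈ dyI n i :=
  ⟨le_rfl, by gcongr; linarith⟩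

lemma dyI_eq_union (n i : ℕ) : dyI n i = dyI (n + 1) (2 * i) ∪ dyI (n + 1) (2 * i + 1) := by
  have hmid : ((2 * i : ℕ) : ℝ) + 1 = ((2 * i + 1 : ℕ) : ℝ) := by push_cast; ring
  simp only [dyI]
  rw [hmid, Set.Ico_union_Ico_eq_Ico (by gcongr; norm_num) (by gcongr; linarith)]
  congr 1 <;> (rw [pow_succ]; push_cast; ring)

lemma dyI_disjoint {n i i' : ℕ} (h : i ≠ i') : Disjoint (dyI n i) (dyI n i') := by
  wlog hlt : i < i' generalizing i i'
  · exact (this h.symm (h.lt_or_gt.resolve_left hlt)).symm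
  have hle : ((i : ℝ) + 1) / 2 ^ n ≤ (i' : ℝ) / 2 ^ n := by
    gcongr; exact_mod_cast hlt
  exact Set.disjoint_left.mpr fun x hx hx' => (hx.2.trans_le hle).not_ge hx'.1

lemma volume_dyI (n i : ℕ) : volume (dyI n i) = ENNReal.ofReal (1 / 2 ^ n) := by
  rw [dyI, Real.volume_Ico]
  congr 1
  ring

lemma integral_indicator_dyI (n i : ℕ) :
    ∫ x, (dyI n i).indicator (1 : ℝ → ℝ) x = 1 / 2 ^ n := by
  rw [integral_indicator_one (show MeasurableSet (dyI n i) from measurableSet_Ico),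
    measureReal_def, volume_dyI, ENNReal.toReal_ofReal (by positivity)]

lemma haarFn_eq_indicator_sub_indicator (n i : ℕ) :
    haarFn n i = (dyI (n + 1) (2 * i)).indicator 1 - (dyI (n + 1) (2 * i + 1)).indicator 1 := by
  funext x
  have hdisj : x ∈ dyI (n + 1) (2 * i) → x ∉ dyI (n + 1) (2 * i + 1) :=
    fun h => Set.disjoint_left.mp (dyI_disjoint (show 2 * i ≠ 2 * i + 1 by omega)) h
  simp only [haarFn, Pi.sub_apply, Set.indicator_apply, Pi.one_apply]
  split_ifs <;> simp_all

lemma haarFn_mul_self (n i : ℕ) (x : ℝ) :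
    haarFn n i x * haarFn n i x = (dyI n i).indicator 1 x := by
  rw [haarFn_eq_indicator_sub_indicator, dyI_eq_union n i]
  have hdisj : x ∈ dyI (n + 1) (2 * i) → x ∉ dyI (n + 1) (2 * i + 1) :=
    fun h => Set.disjoint_left.mp (dyI_disjoint (show 2 * i ≠ 2 * i + 1 by omega)) h
  simp only [Pi.sub_apply, Set.indicator_apply, Pi.one_apply, Set.mem_union]
  split_ifs <;> simp_all

lemma haarFn_eq_zero_of_notMem {n i : ℕ} {x : ℝ} (hx : x ∉ dyI n i) : haarFn n i x = 0 := by
  rw [dyI_eq_union, Set.mem_union, not_or] at hx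
  simp [haarFn, hx.1, hx.2]

lemma haarFn_mul_haarFn_of_disjoint {n i n' i' : ℕ} (h : Disjoint (dyI n i) (dyI n' i'))
    (x : ℝ) : haarFn n i x * haarFn n' i' x = 0 := by
  by_cases hx : x ∈ dyI n i
  · rw [haarFn_eq_zero_of_notMem (Set.disjoint_left.mp h hx), mul_zero]
  · rw [haarFn_eq_zero_of_notMem hx, zero_mul]

lemma integral_haarFn_mul_self (n i : ℕ) : ∫ x, haarFn n i x * haarFn n i x = 1 / 2 ^ n := by
  simp_rw [haarFn_mul_self, integral_indicator_dyI]

lemma indicator_dyI_mem_dyadicSpan {n i : ℕ} (h : i < 2 ^ n) :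
    (dyI n i).indicator 1 ∈ dyadicSpan :=
  Submodule.subset_span ⟨n, i, h, rfl⟩

lemma haarFn_mem_dyadicSpan {n i : ℕ} (h : i < 2 ^ n) : haarFn n i ∈ dyadicSpan := by
  rw [haarFn_eq_indicator_sub_indicator]
  exact sub_mem (indicator_dyI_mem_dyadicSpan (by rw [pow_succ]; omega))
    (indicator_dyI_mem_dyadicSpan (by rw [pow_succ]; omega))

section Collection

variable {Γ : Finset (ℕ × ℕ)}

lemma hGamma_eq_sum (θ : ℕ × ℕ → Bool) :
    hGamma Γ θ = ∑ J ∈ Γ, (if θ J then (1 : ℝ) else -1) • haarFn J.1 J.2 := by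
  funext x
  simp only [hGamma, Finset.sum_apply, Pi.smul_apply, smul_eq_mul]

/-- Orthogonality of the Haar functions of disjoint intervals. -/
lemma integral_hGamma_mul_haarFn
    (hdisj : ∀ J ∈ Γ, ∀ J' ∈ Γ, J ≠ J' → Disjoint (dyI J.1 J.2) (dyI J'.1 J'.2))
    (θ : ℕ × ℕ → Bool) {J : ℕ × ℕ} (hJ : J ∈ Γ) :
    ∫ x, hGamma Γ θ x * haarFn J.1 J.2 x = (if θ J then 1 else -1) * (1 / 2 ^ J.1) := by
  have hpt : ∀ x, hGamma Γ θ x * haarFn J.1 J.2 x =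
      (if θ J then 1 else -1) * (haarFn J.1 J.2 x * haarFn J.1 J.2 x) := fun x => by
    rw [hGamma, Finset.sum_mul, Finset.sum_eq_single_of_mem J hJ, mul_assoc]
    intro J' hJ' hne
    rw [mul_assoc, haarFn_mul_haarFn_of_disjoint (hdisj J' hJ' J hJ hne), mul_zero]
  simp_rw [hpt, integral_const_mul, integral_haarFn_mul_self]

lemma indicator_GammaStar_eq_sum
    (hdisj : ∀ J ∈ Γ, ∀ J' ∈ Γ, J ≠ J' → Disjoint (dyI J.1 J.2) (dyI J'.1 J'.2)) :
    (GammaStar Γ).indicator (1 : ℝ → ℝ) = ∑ J ∈ Γ, (dyI J.1 J.2).indicator 1 := by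
  ext x
  rw [Finset.sum_apply]
  exact Finset.indicator_biUnion_apply Γ _ (fun J hJ J' hJ' hne => hdisj J hJ J' hJ' hne) x

lemma indicator_GammaStar_mem_dyadicSpan (hval : ∀ J ∈ Γ, J.2 < 2 ^ J.1)
    (hdisj : ∀ J ∈ Γ, ∀ J' ∈ Γ, J ≠ J' → Disjoint (dyI J.1 J.2) (dyI J'.1 J'.2)) :
    (GammaStar Γ).indicator 1 ∈ dyadicSpan := by
  rw [indicator_GammaStar_eq_sum hdisj]
  exact Submodule.sum_mem _ fun J hJ => indicator_dyI_mem_dyadicSpan (hval J hJ)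

lemma indicator_GammaStar_ne_zero {J : ℕ × ℕ} (hJ : J ∈ Γ) :
    (GammaStar Γ).indicator (1 : ℝ → ℝ) ≠ 0 := fun h => by
  have hx : (J.2 : ℝ) / 2 ^ J.1 ∈ GammaStar Γ := Set.mem_biUnion hJ (left_mem_dyI J.1 J.2)
  simpa [Set.indicator_of_mem hx] using congrFun h ((J.2 : ℝ) / 2 ^ J.1)

end Collection

namespace HaarSystemSpace

variable {X : Type*} [NormedAddCommGroup X] [NormedSpace ℝ X] (H : HaarSystemSpace X)

lemma norm_j_ne_zero {f : ℝ → ℝ} (hf : f ∈ dyadicSpan) (hf0 : f ≠ 0) : ‖H.j f‖ ≠ 0 := by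
  rw [H.norm_j f hf]
  exact fun h => hf0 (H.hn.eq_zero f hf h)

lemma norm_j_indicator_dyI_ne_zero {n i : ℕ} (h : i < 2 ^ n) :
    ‖H.j ((dyI n i).indicator 1)‖ ≠ 0 :=
  H.norm_j_ne_zero (indicator_dyI_mem_dyadicSpan h) fun h0 => by
    simpa [Set.indicator_of_mem (left_mem_dyI n i)] using congrFun h0 ((i : ℝ) / 2 ^ n)

lemma e_some (J : ℕ × ℕ) :
    H.e (some J) = ‖H.j ((dyI J.1 J.2).indicator 1)‖⁻¹ • H.j (haarFn J.1 J.2) := rfl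

lemma j_hGamma_eq_sum {Γ : Finset (ℕ × ℕ)} (hval : ∀ J ∈ Γ, J.2 < 2 ^ J.1)
    (θ : ℕ × ℕ → Bool) :
    H.j (hGamma Γ θ) = ∑ J ∈ Γ,
      ((if θ J then 1 else -1) * ‖H.j ((dyI J.1 J.2).indicator 1)‖) • H.e (some J) := by
  rw [hGamma_eq_sum, map_sum]
  refine Finset.sum_congr rfl fun J hJ => ?_
  rw [map_smul, e_some, smul_smul, mul_assoc,
    mul_inv_cancel₀ (H.norm_j_indicator_dyI_ne_zero (hval J hJ)), mul_one]

end HaarSystemSpace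

theorem statement17_general {X : Type*} [NormedAddCommGroup X] [NormedSpace ℝ X]
    (H : HaarSystemSpace X)
    (T : Lp X 1 mu01 →L[ℝ] Lp X 1 mu01)
    (TL : Option (ℕ × ℕ) → Lp ℝ 1 mu01 → Lp ℝ 1 mu01)
    (hdiag : ∀ L, validIdx L → ∀ f : Lp ℝ 1 mu01,
      T (tensorL1 f (H.e L)) = tensorL1 (TL L f) (H.e L))
    (Γ : Finset (ℕ × ℕ)) (hval : ∀ J ∈ Γ, J.2 < 2 ^ J.1)
    (hdisj : ∀ J ∈ Γ, ∀ J' ∈ Γ, J ≠ J' → Disjoint (dyI J.1 J.2) (dyI J'.1 J'.2))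
    (θ : ℕ × ℕ → Bool) (g : X →L[ℝ] ℝ)
    (hg : ∀ f ∈ dyadicSpan, g (H.j f) =
      (‖H.j ((GammaStar Γ).indicator 1)‖ / lenGamma Γ) * ∫ x, hGamma Γ θ x * f x)
    (f : Lp ℝ 1 mu01) :
    entryFun T g (‖H.j ((GammaStar Γ).indicator 1)‖⁻¹ • H.j (hGamma Γ θ)) f =
      ∑ J ∈ Γ, ((1 / 2 ^ J.1 : ℝ) / lenGamma Γ) • TL (some J) f := by
  set κ := ‖H.j ((GammaStar Γ).indicator 1)‖
  simp_rw [H.j_hGamma_eq_sum hval, Finset.smul_sum, smul_smul]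
  rw [entryFun_sum_smul_of_diag T g Γ _ _ (fun J => TL (some J)) f
    fun J hJ => hdiag (some J) (hval J hJ) f]
  refine Finset.sum_congr rfl fun J hJ => ?_
  have hκ : κ ≠ 0 := H.norm_j_ne_zero (indicator_GammaStar_mem_dyadicSpan hval hdisj)
    (indicator_GammaStar_ne_zero hJ)
  have hχ := H.norm_j_indicator_dyI_ne_zero (hval J hJ)
  have hθ : (if θ J then (1 : ℝ) else -1) * (if θ J then 1 else -1) = 1 := by
    cases θ J <;> norm_num
  rw [H.e_some, map_smul, smul_eq_mul, hg _ (haarFn_mem_dyadicSpan (hval J hJ)),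
    integral_hGamma_mul_haarFn hdisj θ hJ]
  congr 1
  field_simp
  linear_combination (lenGamma Γ)⁻¹ * hθ

theorem statement17 {X : Type*} [NormedAddCommGroup X] [NormedSpace ℝ X]
    (H : HaarSystemSpace X)
    (T : Lp X 1 mu01 →L[ℝ] Lp X 1 mu01)
    (TL : Option (ℕ × ℕ) → Lp ℝ 1 mu01 → Lp ℝ 1 mu01)
    (hdiag : ∀ L, validIdx L → ∀ f : Lp ℝ 1 mu01,
      T (tensorL1 f (H.e L)) = tensorL1 (TL L f) (H.e L))
    (Γ : Finset (ℕ × ℕ)) (hne : Γ.Nonempty) (hval : ∀ J ∈ Γ, J.2 < 2 ^ J.1)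
    (hdisj : ∀ J ∈ Γ, ∀ J' ∈ Γ, J ≠ J' → Disjoint (dyI J.1 J.2) (dyI J'.1 J'.2))
    (θ : ℕ × ℕ → Bool) (g : X →L[ℝ] ℝ)
    (hg : ∀ f ∈ dyadicSpan, g (H.j f) =
      (‖H.j ((GammaStar Γ).indicator 1)‖ / lenGamma Γ) * ∫ x, hGamma Γ θ x * f x)
    (f : Lp ℝ 1 mu01) :
    entryFun T g (‖H.j ((GammaStar Γ).indicator 1)‖⁻¹ • H.j (hGamma Γ θ)) f =
      ∑ J ∈ Γ, ((1 / 2 ^ J.1 : ℝ) / lenGamma Γ) • TL (some J) f :=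
  statement17_general H T TL hdiag Γ hval hdisj θ g hg f
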